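/- arXiv:2308.08118 — 4 statements merged into one kernel-verified Lean document; each statement's English description precedes it below -/
import Mathlib

section
/- Let R be a discrete valuation ring with uniformizer t and let n ≥ 3 be an integer. Write B = R/(t^n) and B' = R/(t^{n-1}), and let π'' : B → B' be the canonical projection (induced by the identity of R). If A is a subring of B such that the restriction of π'' to A is surjective onto B', then A = B. -/
/-!
The kernel of `π'' : B → B'` is the principal ideal `(x)` with `x = t^{n-1}`, and `x` is killed by
both `t` and `x` itself. Lifting `t` to some `a ∈ A` gives `a = t + e` with `e ∈ (x)`, so
`t e = e² = 0` and hence `a^{n-1} = t^{n-1} = x` because `n - 1 ≥ 2`; thus `x ∈ A`. Since `x² = 0`,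
every multiple `c x` equals `a' x` for any lift `a' ∈ A` of `c`, so `(x) ⊆ A`, and `A + (x) = B`
gives `A = B`.
-/

theorem add_pow_eq_pow_of_mul_eq_zero {B : Type*} [CommRing B] {t e : B} (hte : t * e = 0)
    (hee : e * e = 0) {m : ℕ} (hm : 2 ≤ m) : (t + e) ^ m = t ^ m := by
  obtain ⟨j, rfl⟩ := Nat.exists_eq_add_of_le' hm
  induction j with
  | zero => linear_combination 2 * hte + hee
  | succ j ih => linear_combination (t + e) * ih (by omega) + t ^ (j + 1) * hte

theorem Ideal.Quotient.ker_factor_span_pow {R : Type*} [CommRing R] (t : R) {k n : ℕ}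
    (h : Ideal.span {t ^ n} ≤ Ideal.span {t ^ k}) :
    RingHom.ker (Ideal.Quotient.factor h) =
      Ideal.span {Ideal.Quotient.mk (Ideal.span {t ^ n}) (t ^ k)} := by
  rw [Ideal.Quotient.factor_ker, Ideal.map_span, Set.image_singleton]

namespace Subring

variable {B C : Type*} [CommRing B] [Ring C] {A : Subring B} {f : B →+* C} {x : B}

theorem exists_eq_add_mul_of_ker_eq_span (hA : Function.Surjective fun a : A => f a)
    (hker : RingHom.ker f = Ideal.span {x}) (b : B) : ∃ a ∈ A, ∃ c, b = a + c * x := by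
  obtain ⟨a, ha⟩ := hA (f b)
  have hmem : b - a ∈ Ideal.span {x} := hker ▸ (RingHom.sub_mem_ker_iff f).mpr ha.symm
  obtain ⟨c, hc⟩ := Ideal.mem_span_singleton'.mp hmem
  exact ⟨a, a.2, c, by rw [hc]; ring⟩

theorem mem_of_ker_eq_span_of_pow_eq (hA : Function.Surjective fun a : A => f a)
    (hker : RingHom.ker f = Ideal.span {x}) (hxx : x * x = 0) {t : B} (htx : t * x = 0)
    {m : ℕ} (hm : 2 ≤ m) (htm : t ^ m = x) : x ∈ A := by
  obtain ⟨a, haA, c, hc⟩ := exists_eq_add_mul_of_ker_eq_span hA hker t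
  have ha : a = t + -(c * x) := by rw [hc]; ring
  have hpow : a ^ m = x := by
    rw [ha, add_pow_eq_pow_of_mul_eq_zero (by linear_combination -c * htx)
      (by linear_combination c ^ 2 * hxx) hm, htm]
  exact hpow ▸ pow_mem haA m

theorem eq_top_of_ker_eq_span (hA : Function.Surjective fun a : A => f a)
    (hker : RingHom.ker f = Ideal.span {x}) (hxA : x ∈ A) (hxx : x * x = 0) : A = ⊤ := by
  refine eq_top_iff.mpr fun b _ => ?_
  obtain ⟨a, haA, c, rfl⟩ := exists_eq_add_mul_of_ker_eq_span hA hker b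
  obtain ⟨a', ha'A, d, rfl⟩ := exists_eq_add_mul_of_ker_eq_span hA hker c
  have hcx : (a' + d * x) * x = a' * x := by linear_combination d * hxx
  rw [hcx]
  exact add_mem haA (mul_mem ha'A hxA)

end Subring

theorem stmt_0_general (R : Type*) [CommRing R]
    (t : R) (n : ℕ) (hn : 3 ≤ n)
    (A : Subring (R ⧸ Ideal.span {t ^ n}))
    (hsurj : Function.Surjective fun a : A =>
      (Ideal.Quotient.factor (S := Ideal.span {t ^ n}) (T := Ideal.span {t ^ (n - 1)})
        (Ideal.span_singleton_le_span_singleton.mpr (pow_dvd_pow t (Nat.sub_le n 1))))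
        (a : R ⧸ Ideal.span {t ^ n})) :
    A = ⊤ := by
  set φ := Ideal.Quotient.mk (Ideal.span {t ^ n})
  have hker := Ideal.Quotient.ker_factor_span_pow t
    (Ideal.span_singleton_le_span_singleton.mpr (pow_dvd_pow t (Nat.sub_le n 1)))
  have hvanish : ∀ m, n ≤ m → φ (t ^ m) = 0 := fun m hm =>
    Ideal.Quotient.eq_zero_iff_mem.mpr (Ideal.mem_span_singleton.mpr (pow_dvd_pow t hm))
  have hxx : φ (t ^ (n - 1)) * φ (t ^ (n - 1)) = 0 := by
    rw [← map_mul, ← pow_add]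
    exact hvanish _ (by omega)
  have htx : φ t * φ (t ^ (n - 1)) = 0 := by
    rw [← map_mul, ← pow_succ']
    exact hvanish _ (by omega)
  have hxA : φ (t ^ (n - 1)) ∈ A :=
    Subring.mem_of_ker_eq_span_of_pow_eq hsurj hker hxx htx (by omega) (map_pow φ t _).symm
  exact Subring.eq_top_of_ker_eq_span hsurj hker hxA hxx

/-- Let `R` be a discrete valuation ring with uniformizer `t` and let `n ≥ 3`.
Write `B = R/(t^n)` and `B' = R/(t^{n-1})`, and let `π'' : B → B'` be the canonical
projection. If `A` is a subring of `B` such that the restriction of `π''` to `A` is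
surjective onto `B'`, then `A = B`. -/
theorem stmt_0 (R : Type*) [CommRing R] [IsDomain R] [IsDiscreteValuationRing R]
    (t : R) (ht : Irreducible t) (n : ℕ) (hn : 3 ≤ n)
    (A : Subring (R ⧸ Ideal.span {t ^ n}))
    (hsurj : Function.Surjective fun a : A =>
      (Ideal.Quotient.factor (S := Ideal.span {t ^ n}) (T := Ideal.span {t ^ (n - 1)})
        (Ideal.span_singleton_le_span_singleton.mpr (pow_dvd_pow t (Nat.sub_le n 1))))
        (a : R ⧸ Ideal.span {t ^ n})) :
    A = ⊤ :=
  stmt_0_general R t n hn A hsurj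
end

section
/- Let R be a discrete valuation ring with uniformizer t, let n ≥ 3 be an integer, and let π : R → B := R/(t^n) be the quotient map. Let A be a subring of B such that for every r ∈ R there exists s ∈ R with π(r) − π(s)·π(t)^{n-1} ∈ A. Then π(r)·π(t)^m ∈ A for every r ∈ R and every integer m ≥ 1. -/
/-!
If every element of `A` can be reached modulo the socle `B ⬝ x ^ (n - 1)` of `B`, where
`x ^ n = 0` and `n ≥ 3`, then the socle itself already lies in `A`: for `b ∈ B` choose
`b x ^ (n - 2) - c₁ x ^ (n - 1) ∈ A` and `x - c₂ x ^ (n - 1) ∈ A`; their product is `b x ^ (n - 1)`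
because every other term has degree at least `n` in `x`. Hence `A = B`.
-/

namespace Subring

variable {B : Type*} [CommRing B] {A : Subring B} {x : B} {n : ℕ}

theorem mul_pow_pred_mem_of_forall_exists_sub_mem (hx : x ^ n = 0) (hn : 3 ≤ n)
    (hA : ∀ b, ∃ c, b - c * x ^ (n - 1) ∈ A) (b : B) : b * x ^ (n - 1) ∈ A := by
  obtain ⟨k, rfl⟩ : ∃ k, n = k + 3 := ⟨n - 3, by omega⟩
  obtain ⟨c₁, hc₁⟩ := hA (b * x ^ (k + 1))
  obtain ⟨c₂, hc₂⟩ := hA x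
  have hprod : (b * x ^ (k + 1) - c₁ * x ^ (k + 3 - 1)) * (x - c₂ * x ^ (k + 3 - 1)) =
      b * x ^ (k + 3 - 1) := by
    rw [show k + 3 - 1 = k + 2 from rfl]
    linear_combination (c₁ * c₂ * x ^ (k + 1) - b * c₂ * x ^ k - c₁) * hx
  exact hprod ▸ A.mul_mem hc₁ hc₂

theorem eq_top_of_forall_exists_sub_mul_pow_pred_mem (hx : x ^ n = 0) (hn : 3 ≤ n)
    (hA : ∀ b, ∃ c, b - c * x ^ (n - 1) ∈ A) : A = ⊤ := by
  refine eq_top_iff.mpr fun b _ ↦ ?_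
  obtain ⟨c, hc⟩ := hA b
  simpa using A.add_mem hc (mul_pow_pred_mem_of_forall_exists_sub_mem hx hn hA c)

end Subring

theorem stmt_2_general (R : Type*) [CommRing R]
    (t : R) (n : ℕ) (hn : 3 ≤ n)
    (A : Subring (R ⧸ Ideal.span {t ^ n}))
    (hA : ∀ r : R, ∃ s : R,
      Ideal.Quotient.mk (Ideal.span {t ^ n}) r -
        Ideal.Quotient.mk (Ideal.span {t ^ n}) s *
          (Ideal.Quotient.mk (Ideal.span {t ^ n}) t) ^ (n - 1) ∈ A) :
    ∀ (r : R) (m : ℕ), 1 ≤ m →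
      Ideal.Quotient.mk (Ideal.span {t ^ n}) r *
        (Ideal.Quotient.mk (Ideal.span {t ^ n}) t) ^ m ∈ A := by
  set π := Ideal.Quotient.mk (Ideal.span {t ^ n})
  have hnil : π t ^ n = 0 := by
    rw [← map_pow, Ideal.Quotient.eq_zero_iff_mem]
    exact Ideal.mem_span_singleton_self _
  have hA' : ∀ b, ∃ c, b - c * π t ^ (n - 1) ∈ A := by
    intro b
    obtain ⟨r, rfl⟩ := Ideal.Quotient.mk_surjective b
    obtain ⟨s, hs⟩ := hA r
    exact ⟨π s, hs⟩
  intro r m _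
  simp [Subring.eq_top_of_forall_exists_sub_mul_pow_pred_mem hnil hn hA']

/-- Let `R` be a DVR with uniformizer `t`, `n ≥ 3`, `π : R → B := R/(t^n)` the quotient
map, and `A` a subring of `B` such that for every `r ∈ R` there exists `s ∈ R` with
`π r - π s * (π t)^(n-1) ∈ A`. Then `π r * (π t)^m ∈ A` for every `r ∈ R` and `m ≥ 1`. -/
theorem stmt_2 (R : Type*) [CommRing R] [IsDomain R] [IsDiscreteValuationRing R]
    (t : R) (ht : Irreducible t) (n : ℕ) (hn : 3 ≤ n)
    (A : Subring (R ⧸ Ideal.span {t ^ n}))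
    (hA : ∀ r : R, ∃ s : R,
      Ideal.Quotient.mk (Ideal.span {t ^ n}) r -
        Ideal.Quotient.mk (Ideal.span {t ^ n}) s *
          (Ideal.Quotient.mk (Ideal.span {t ^ n}) t) ^ (n - 1) ∈ A) :
    ∀ (r : R) (m : ℕ), 1 ≤ m →
      Ideal.Quotient.mk (Ideal.span {t ^ n}) r *
        (Ideal.Quotient.mk (Ideal.span {t ^ n}) t) ^ m ∈ A :=
  stmt_2_general R t n hn A hA
end

section
/- Let A be a commutative ring and let (I_n)_{n≥0} be a sequence of ideals of A such that I_0 = A, I_{n+1} ⊆ I_n for every n ≥ 0, and I_n = I_1^n + I_{n+1} for every n ≥ 1. Assume moreover that there exists a positive integer a such that I_{m+a} = I_m · I_a for every m ≥ 0. Then I_n = I_1^n for every n ≥ 0. -/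
/-!
Iterating `I n = I 1 ^ n + I (n + 1)` gives `I n = I 1 ^ n + I (n + k)` for every `k`. Taking
`n + k = n * a`, the tail is `I (n * a) = I a ^ n`, and `I a ≤ I 1` because
`I a = I 1 ^ a + I 1 * I a`; so the tail already lies in `I 1 ^ n`.
-/

namespace Ideal

variable {R : Type*} [CommSemiring R] {I : ℕ → Ideal R}

theorem eq_pow_add_of_forall_eq_pow_add_succ {J : Ideal R} {n : ℕ}
    (h : ∀ m, n ≤ m → I m = J ^ m + I (m + 1)) (k : ℕ) : I n = J ^ n + I (n + k) := by
  induction k with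
  | zero => rw [add_zero, add_eq_sup, sup_eq_right.mpr (h n le_rfl ▸ le_sup_left)]
  | succ k ih =>
    rw [ih, h (n + k) (Nat.le_add_right n k), ← add_assoc (J ^ n), add_eq_sup (I := J ^ n),
      sup_eq_left.mpr (pow_le_pow_right (Nat.le_add_right n k)), add_assoc n k 1]

theorem apply_mul_eq_pow_of_apply_add_eq_mul (h0 : I 0 = ⊤) {a : ℕ}
    (hmul : ∀ m, I (m + a) = I m * I a) (k : ℕ) : I (k * a) = I a ^ k := by
  induction k with
  | zero => rw [zero_mul, h0, pow_zero, one_eq_top]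
  | succ k ih => rw [Nat.succ_mul, hmul, ih, pow_succ]

end Ideal

theorem stmt_4_general (A : Type*) [CommRing A] (I : ℕ → Ideal A)
    (h0 : I 0 = ⊤)
    (hgen : ∀ n, 1 ≤ n → I n = I 1 ^ n + I (n + 1))
    (hmul : ∃ a : ℕ, 0 < a ∧ ∀ m, I (m + a) = I m * I a) :
    ∀ n, I n = I 1 ^ n := by
  obtain ⟨a, ha, hmul⟩ := hmul
  have ha_le : I a ≤ I 1 := calc
    I a = I 1 ^ a + I (1 + a) := by rw [add_comm 1 a]; exact hgen a ha
    _ = I 1 ^ a ⊔ I 1 * I a := by rw [hmul, Ideal.add_eq_sup]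
    _ ≤ I 1 := sup_le (Ideal.pow_le_self ha.ne') Ideal.mul_le_left
  rintro (_ | n)
  · rw [h0, pow_zero, Ideal.one_eq_top]
  have hn : 0 < n + 1 := n.succ_pos
  refine le_antisymm ?_ ((hgen (n + 1) hn) ▸ le_sup_left)
  rw [Ideal.eq_pow_add_of_forall_eq_pow_add_succ (fun m hm ↦ hgen m (hn.trans_le hm))
      ((n + 1) * a - (n + 1)), Nat.add_sub_cancel' (Nat.le_mul_of_pos_right _ ha),
    Ideal.apply_mul_eq_pow_of_apply_add_eq_mul h0 hmul, Ideal.add_eq_sup]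
  exact sup_le le_rfl (Ideal.pow_right_mono ha_le _)

/-- Let `A` be a commutative ring and `(I_n)` a sequence of ideals with `I 0 = ⊤`,
`I (n+1) ⊆ I n` for all `n`, and `I n = (I 1)^n + I (n+1)` for all `n ≥ 1`. If there
is a positive integer `a` with `I (m+a) = I m * I a` for all `m ≥ 0`, then
`I n = (I 1)^n` for every `n ≥ 0`. -/
theorem stmt_4 (A : Type*) [CommRing A] (I : ℕ → Ideal A)
    (h0 : I 0 = ⊤) (hanti : ∀ n, I (n + 1) ≤ I n)
    (hgen : ∀ n, 1 ≤ n → I n = I 1 ^ n + I (n + 1))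
    (hmul : ∃ a : ℕ, 0 < a ∧ ∀ m, I (m + a) = I m * I a) :
    ∀ n, I n = I 1 ^ n :=
  stmt_4_general A I h0 hgen hmul
end

section
/- Let (A, 𝔪) be a Noetherian local ring and let (I_n)_{n≥0} be a sequence of ideals of A with I_0 = A, I_1 = 𝔪, I_{n+1} ⊆ I_n for every n ≥ 0, and I_m · I_n ⊆ I_{m+n} for all m, n ≥ 0. Suppose there exist elements x, y ∈ I_1 and z ∈ I_2 such that, writing J_1 = (x, y) and J_2 = (z) for the ideals they generate: (i) I_1 = I_2 + J_1; (ii) I_2 = I_3 + J_1^2 + J_2; (iii) I_n = I_{n+1} + I_1·I_{n−1} + I_2·I_{n−2} for every n ≥ 3; and (iv) there exists a positive integer a with I_{m+a} = I_m · I_a for every m ≥ 0. Then 𝔪 = (x, y, z); in particular the embedding dimension dim_{A/𝔪}(𝔪/𝔪²) is at most 3. -/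
/-!
Everything reduces to `I 3 ⊆ 𝔪 ^ 2`. By (iii), `I n ⊆ I (n + 1) + 𝔪 ^ 2` for `n ≥ 3`, so
`I 3 ⊆ I N + 𝔪 ^ 2` for every `N ≥ 3`, and by (iv) `I (2a) = (I a) ^ 2 ⊆ 𝔪 ^ 2`. Then (i) and (ii)
give `𝔪 ⊆ (x, y, z) + 𝔪 ^ 2`, and Nakayama's lemma gives `𝔪 = (x, y, z)`; the cotangent space
is then spanned by the images of `x`, `y`, `z`.
-/

open IsLocalRing

theorem le_of_forall_le_succ_sup {α : Type*} [SemilatticeSup α] {f : ℕ → α} {b : α} {k p : ℕ}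
    (hstep : ∀ n, k ≤ n → f n ≤ f (n + 1) ⊔ b) (hkp : k ≤ p) (hp : f p ≤ b) : f k ≤ b := by
  have hle : ∀ n, k ≤ n → f k ≤ f n ⊔ b :=
    Nat.le_induction le_sup_left fun n hn ih => ih.trans (sup_le (hstep n hn) le_sup_right)
  exact (hle p hkp).trans (sup_le hp le_rfl)

theorem IsLocalRing.maximalIdeal_eq_of_le_sup_sq {R : Type*} [CommRing R] [IsNoetherianRing R]
    [IsLocalRing R] {J : Ideal R} (hJ : J ≤ maximalIdeal R)
    (h : maximalIdeal R ≤ J ⊔ maximalIdeal R ^ 2) : maximalIdeal R = J := by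
  refine le_antisymm ?_ hJ
  refine Submodule.le_of_le_smul_of_le_jacobson_bot (IsNoetherian.noetherian _)
    (jacobson_eq_maximalIdeal ⊥ bot_ne_top).ge ?_
  rwa [smul_eq_mul, ← pow_two]

theorem IsLocalRing.finrank_cotangentSpace_le_ncard {R : Type*} [CommRing R] [IsNoetherianRing R]
    [IsLocalRing R] {s : Set R} (hs : s.Finite) (h : maximalIdeal R = Ideal.span s) :
    Module.finrank (ResidueField R) (CotangentSpace R) ≤ s.ncard := by
  rw [← spanFinrank_maximalIdeal_eq_finrank_cotangentSpace, h]
  exact Submodule.spanFinrank_span_le_ncard_of_finite hs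

namespace Ideal

variable {R : Type*} [CommSemiring R] {I : ℕ → Ideal R} {M : Ideal R}

theorem le_succ_sup_sq_of_eq_sup_mul (hI : Antitone I) (h1 : I 1 ≤ M) {n : ℕ} (hn : 3 ≤ n)
    (hgen : I n = I (n + 1) + I 1 * I (n - 1) + I 2 * I (n - 2)) :
    I n ≤ I (n + 1) ⊔ M ^ 2 := by
  have hM : ∀ k, 1 ≤ k → I k ≤ M := fun k hk => (hI hk).trans h1
  rw [hgen, pow_two]
  exact sup_le (sup_le le_sup_left (le_sup_of_le_right (mul_mono (hM 1 le_rfl) (hM _ (by omega)))))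
    (le_sup_of_le_right (mul_mono (hM 2 one_le_two) (hM _ (by omega))))

theorem three_le_sq_of_eq_sup_mul (hI : Antitone I) (h1 : I 1 ≤ M)
    (hgen : ∀ n, 3 ≤ n → I n = I (n + 1) + I 1 * I (n - 1) + I 2 * I (n - 2))
    {a : ℕ} (ha : 0 < a) (hsq : I (a + a) = I a * I a) : I 3 ≤ M ^ 2 := by
  refine le_of_forall_le_succ_sup (fun n hn => le_succ_sup_sq_of_eq_sup_mul hI h1 hn (hgen n hn))
    (Nat.le_add_right 3 (a + a)) ?_
  have hIa : I a ≤ M := (hI ha).trans h1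
  calc I (3 + (a + a)) ≤ I (a + a) := hI (by omega)
    _ = I a * I a := hsq
    _ ≤ M ^ 2 := pow_two M ▸ mul_mono hIa hIa

theorem one_le_sup_sup_sq {J₁ J₂ : Ideal R} (hJ₁ : J₁ ≤ M) (hi : I 1 = I 2 + J₁)
    (hii : I 2 = I 3 + J₁ ^ 2 + J₂) (h3 : I 3 ≤ M ^ 2) : I 1 ≤ J₁ ⊔ J₂ ⊔ M ^ 2 := by
  have hJ₁sq : J₁ ^ 2 ≤ M ^ 2 := pow_right_mono hJ₁ 2
  rw [hi, hii]
  simp only [add_eq_sup]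
  exact sup_le (sup_le (sup_le (le_sup_of_le_right h3) (le_sup_of_le_right hJ₁sq))
    (le_sup_of_le_left le_sup_right)) (le_sup_of_le_left le_sup_left)

end Ideal

theorem stmt_6_general (A : Type*) [CommRing A] [IsNoetherianRing A] [IsLocalRing A]
    (I : ℕ → Ideal A) (h1 : I 1 = IsLocalRing.maximalIdeal A)
    (hanti : ∀ n, I (n + 1) ≤ I n)
    (x y z : A) (hx : x ∈ I 1) (hy : y ∈ I 1) (hz : z ∈ I 2)
    (hi : I 1 = I 2 + Ideal.span {x, y})
    (hii : I 2 = I 3 + Ideal.span {x, y} ^ 2 + Ideal.span {z})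
    (hiii : ∀ n, 3 ≤ n → I n = I (n + 1) + I 1 * I (n - 1) + I 2 * I (n - 2))
    (hpow : ∃ a : ℕ, 0 < a ∧ ∀ m, I (m + a) = I m * I a) :
    IsLocalRing.maximalIdeal A = Ideal.span {x, y, z} ∧
      Module.finrank (A ⧸ IsLocalRing.maximalIdeal A)
        (IsLocalRing.maximalIdeal A).Cotangent ≤ 3 := by
  obtain ⟨a, ha, hpa⟩ := hpow
  have hI : Antitone I := antitone_nat_of_succ_le hanti
  have hspan : Ideal.span {x, y, z} = Ideal.span {x, y} ⊔ Ideal.span {z} := by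
    rw [← Ideal.span_union, Set.insert_union, Set.singleton_union]
  have hle : Ideal.span {x, y, z} ≤ I 1 := by
    rw [Ideal.span_le]
    simp only [Set.insert_subset_iff, Set.singleton_subset_iff]
    exact ⟨hx, hy, hI one_le_two hz⟩
  have h3 : I 3 ≤ I 1 ^ 2 := Ideal.three_le_sq_of_eq_sup_mul hI le_rfl hiii ha (hpa a)
  have hxy : Ideal.span {x, y} ≤ I 1 := le_sup_left.trans (hspan ▸ hle)
  have heq : maximalIdeal A = Ideal.span {x, y, z} := by
    refine maximalIdeal_eq_of_le_sup_sq (h1 ▸ hle) ?_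
    rw [← h1, hspan]
    exact Ideal.one_le_sup_sup_sq hxy hi hii h3
  refine ⟨heq, (finrank_cotangentSpace_le_ncard (Set.toFinite _) heq).trans ?_⟩
  grw [Set.ncard_insert_le, Set.ncard_insert_le, Set.ncard_singleton]

/-- Let `(A, 𝔪)` be a Noetherian local ring and `(I_n)` a sequence of ideals with
`I 0 = ⊤`, `I 1 = 𝔪`, `I (n+1) ⊆ I n`, and `I m * I n ⊆ I (m+n)`. Suppose there are
`x, y ∈ I 1` and `z ∈ I 2` such that, with `J₁ = (x, y)` and `J₂ = (z)`:
(i) `I 1 = I 2 + J₁`; (ii) `I 2 = I 3 + J₁² + J₂`;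
(iii) `I n = I (n+1) + I 1 * I (n-1) + I 2 * I (n-2)` for all `n ≥ 3`; and
(iv) there exists `a > 0` with `I (m+a) = I m * I a` for every `m ≥ 0`.
Then `𝔪 = (x, y, z)`; in particular `dim_{A/𝔪}(𝔪/𝔪²) ≤ 3`. -/
theorem stmt_6 (A : Type*) [CommRing A] [IsNoetherianRing A] [IsLocalRing A]
    (I : ℕ → Ideal A) (h0 : I 0 = ⊤) (h1 : I 1 = IsLocalRing.maximalIdeal A)
    (hanti : ∀ n, I (n + 1) ≤ I n)
    (hmul : ∀ m n, I m * I n ≤ I (m + n))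
    (x y z : A) (hx : x ∈ I 1) (hy : y ∈ I 1) (hz : z ∈ I 2)
    (hi : I 1 = I 2 + Ideal.span {x, y})
    (hii : I 2 = I 3 + Ideal.span {x, y} ^ 2 + Ideal.span {z})
    (hiii : ∀ n, 3 ≤ n → I n = I (n + 1) + I 1 * I (n - 1) + I 2 * I (n - 2))
    (hpow : ∃ a : ℕ, 0 < a ∧ ∀ m, I (m + a) = I m * I a) :
    IsLocalRing.maximalIdeal A = Ideal.span {x, y, z} ∧
      Module.finrank (A ⧸ IsLocalRing.maximalIdeal A)
        (IsLocalRing.maximalIdeal A).Cotangent ≤ 3 :=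
  stmt_6_general A I h1 hanti x y z hx hy hz hi hii hiii hpow
end
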